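/- Let c ∈ [1, 72/71), γ = 1/c, h ∈ F_c, and φ the inverse of h. Assume A₀ ⊆ P_h satisfies limsup_{n→∞} (log n / φ(n)) · |A₀ ∩ P_h ∩ [n, 2n]| > α₀ > 0 and that A₀ does not contain any arithmetic progression of length three. Then there exists a real number α > 0 (which may depend on φ and γ) and infinitely many primes N with the following property: there exist a set A = A_N ⊆ {1, 2, ..., ⌊N/2⌋} and an integer W ∈ [1/8 · log log N, 1/2 · log log N] such that A does not contain any arithmetic progression of length three, and λ^h_{b,m,N}(A) ≥ α for some 0 ≤ b ≤ m − 1 with gcd(b, m) = 1, where m = ∏_{p ∈ P, p ≤ W} p. -/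

import Mathlib

open Filter Real Set
open scoped Classical

structure Fc (c : ℝ) where
  x₀ : ℝ
  one_le_x₀ : 1 ≤ x₀
  toFun : ℝ → ℝ
  vth : ℝ → ℝ
  Ch : ℝ
  Ch_pos : 0 < Ch
  one_le : ∀ x ≥ x₀, 1 ≤ toFun x
  contDiffOn : ContDiffOn ℝ 3 toFun (Set.Ici x₀)
  deriv_pos : ∀ x ≥ x₀, 0 < deriv toFun x
  deriv2_pos : ∀ x ≥ x₀, 0 < iteratedDeriv 2 toFun x
  vth_contDiffOn : ContDiffOn ℝ 2 vth (Set.Ici x₀)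
  eqn : ∀ x ≥ x₀, toFun x = Ch * x ^ c * Real.exp (∫ t in x₀..x, vth t / t)
  cond_gt : 1 < c →
    Filter.Tendsto vth Filter.atTop (nhds 0) ∧
    Filter.Tendsto (fun x => x * deriv vth x) Filter.atTop (nhds 0) ∧
    Filter.Tendsto (fun x => x ^ 2 * deriv (deriv vth) x) Filter.atTop (nhds 0)
  cond_eq : c = 1 →
    (∀ x ≥ x₀, 0 < vth x) ∧
    (∀ x y, x₀ ≤ x → x ≤ y → vth y ≤ vth x) ∧
    (∀ ε : ℝ, 0 < ε → ∃ C > 0, ∀ x ≥ x₀, 1 / vth x ≤ C * x ^ ε) ∧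
    Filter.Tendsto (fun x => x / toFun x) Filter.atTop (nhds 0) ∧
    Filter.Tendsto vth Filter.atTop (nhds 0) ∧
    Filter.Tendsto (fun x => x * deriv vth x / vth x) Filter.atTop (nhds 0) ∧
    Filter.Tendsto (fun x => x ^ 2 * deriv (deriv vth) x / vth x) Filter.atTop (nhds 0)

def Ph {c : ℝ} (F : Fc c) : Set ℕ :=
  {p : ℕ | p.Prime ∧ ∃ n : ℕ, F.x₀ ≤ (n : ℝ) ∧ (p : ℤ) = ⌊F.toFun n⌋}

noncomputable def e (t : ℝ) : ℂ := Complex.exp (2 * Real.pi * Complex.I * t)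

/-- The measure `λ^h_{b,m,N}` on `Λ^h_{b,m,N} = {0 ≤ n ≤ N : mn + b ∈ P_h}`:
`λ^h_{b,m,N}(n) = ϕ(m) log(mn+b) / (m N φ'(mn+b))` there and `0` otherwise. -/
noncomputable def lamh {c : ℝ} (F : Fc c) (φ : ℝ → ℝ) (b m N n : ℕ) : ℝ :=
  if n ≤ N ∧ m * n + b ∈ Ph F then
    (Nat.totient m : ℝ) * Real.log (m * n + b) / (m * N * deriv φ ((m * n + b : ℕ) : ℝ))
  else 0

/-!
Choose a large `n` with `|A₀ ∩ P_h ∩ [n, 2n]| > α₀ φ(n) / log n`, take `W ≈ (log log n) / 8`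
and `m = W#`, so that `m ≤ 16 log n`, and by Bertrand a prime `N` with `8n < mN ≤ 16n`; then
`log log N = log log n + O(1)`. The primes of the block exceed `m`, so by pigeonhole one coprime
residue class `b` mod `m` holds a `1/ϕ(m)` share of them, and `A = {k : mk + b in that class}`
inherits the absence of three-term progressions from `A₀`. As `h` is convex, `φ` is concave,
whence `φ'(p) ≤ 2 φ(n) / n` for `p ≥ n`: every `k ∈ A` has weight at least
`ϕ(m) log n / (32 φ(n))`, and summing gives `λ(A) ≥ α₀ / 32`.
-/

def HasThreeAP (s : Set ℕ) : Prop :=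
  ∃ a ∈ s, ∃ d : ℕ, d ≠ 0 ∧ a + d ∈ s ∧ a + 2 * d ∈ s

lemma HasThreeAP.mapsTo_mul_add {s t : Set ℕ} {m b : ℕ} (h : HasThreeAP s) (hm : m ≠ 0)
    (hst : MapsTo (fun k => m * k + b) s t) : HasThreeAP t := by
  obtain ⟨a, ha, d, hd, had, ha2d⟩ := h
  refine ⟨m * a + b, hst ha, m * d, mul_ne_zero hm hd, ?_, ?_⟩
  · convert hst had using 1; ring
  · convert hst ha2d using 1; ring

lemma Finset.exists_coprime_residue_card_le_totient_mul {m : ℕ} (hm : 0 < m) (T : Finset ℕ)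
    (hT : ∀ p ∈ T, p.Coprime m) :
    ∃ b < m, b.Coprime m ∧ (T.card : ℝ) ≤ m.totient * (T.filter (· % m = b)).card := by
  have hres : ∀ p ∈ T, p % m ∈ (range m).filter m.Coprime := fun p hp =>
    mem_filter.2 ⟨mem_range.2 (Nat.mod_lt p hm),
      ((ZMod.coprime_mod_iff_coprime p m).2 (hT p hp)).symm⟩
  have htot : (0 : ℝ) < m.totient := by exact_mod_cast Nat.totient_pos.2 hm
  obtain ⟨b, hb, hcard⟩ := exists_le_card_fiber_of_nsmul_le_card_of_maps_to hres
    (card_pos.1 (Nat.totient_pos.2 hm))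
    (b := (T.card : ℝ) / m.totient)
    (by rw [← Nat.totient, nsmul_eq_mul, mul_div_cancel₀ _ htot.ne'])
  obtain ⟨hbm, hcop⟩ := mem_filter.1 hb
  exact ⟨b, mem_range.1 hbm, hcop.symm, by rwa [div_le_iff₀' htot] at hcard⟩

lemma Finset.card_filter_mod_eq_le_card_preimage {T : Finset ℕ} {m b n N : ℕ} (hm : 0 < m)
    (hmN : 8 * n < m * N) (hT : ∀ p ∈ T, m ≤ p ∧ p ≤ 2 * n) :
    (T.filter (· % m = b)).card ≤ ((Icc 1 (N / 2)).filter (fun k => m * k + b ∈ T)).card := by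
  have hdecomp : ∀ p ∈ T.filter (· % m = b), m * (p / m) + b = p := fun p hp => by
    rw [← (mem_filter.1 hp).2]; exact Nat.div_add_mod p m
  refine card_le_card_of_injOn (· / m) (fun p hp => ?_) fun p hp q hq hpq => ?_
  · obtain ⟨hmp, hp2n⟩ := hT p (mem_filter.1 hp).1
    have hdiv := Nat.mul_div_le p m
    have h4 : 4 * (p / m) < N := Nat.lt_of_mul_lt_mul_left (a := m) (by nlinarith)
    refine mem_filter.2 ⟨mem_Icc.2 ⟨(Nat.one_le_div_iff hm).2 hmp,
      (Nat.le_div_iff_mul_le two_pos).2 (show p / m * 2 ≤ N by omega)⟩, ?_⟩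
    rw [hdecomp p hp]; exact (mem_filter.1 hp).1
  · rw [← hdecomp p hp, ← hdecomp q hq]; exact congrArg (m * · + b) hpq

lemma primorial_le_sixteen_mul_log {x : ℝ} {W : ℕ} (hx : 1 ≤ log x)
    (hW : (W : ℝ) ≤ log (log x) / 8 + 2) : (primorial W : ℝ) ≤ 16 * log x := by
  have hL : 0 ≤ log (log x) := log_nonneg hx
  have hlog4 : 0 ≤ log 4 := log_nonneg (by norm_num)
  have hlog4_le : log 4 ≤ 8 := by linarith [log_le_sub_one_of_pos (show (0 : ℝ) < 4 by norm_num)]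
  have hlog16 : log 16 = 2 * log 4 := by
    rw [show (16 : ℝ) = 4 ^ 2 by norm_num, log_pow, Nat.cast_ofNat]
  have hexp : W * log 4 ≤ log (log x) + log 16 := by
    nlinarith [mul_le_mul_of_nonneg_right hW hlog4, mul_le_mul_of_nonneg_left hlog4_le hL]
  calc (primorial W : ℝ) ≤ 4 ^ W := by exact_mod_cast primorial_le_four_pow W
    _ = exp (W * log 4) := by rw [exp_nat_mul, exp_log (by norm_num)]
    _ ≤ exp (log (log x) + log 16) := exp_le_exp.2 hexp
    _ = 16 * log x := by rw [exp_add, exp_log (by linarith), exp_log (by norm_num), mul_comm]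

lemma abs_log_log_sub_le {x y : ℝ} (hx : 1 < x) (hy : √x ≤ y) (hyx : y ≤ x ^ 2) :
    |log (log y) - log (log x)| ≤ log 2 := by
  have hlx : 0 < log x := log_pos hx
  have hsqrt : 0 < √x := sqrt_pos.2 (by linarith)
  have hlow : log x / 2 ≤ log y := by
    rw [← log_sqrt (by linarith)]; exact log_le_log hsqrt hy
  have hup : log y ≤ 2 * log x := by
    rw [← Nat.cast_ofNat, ← log_pow]; exact log_le_log (hsqrt.trans_le hy) hyx
  have h1 : log (log x) - log 2 ≤ log (log y) := by
    rw [← log_div hlx.ne' two_ne_zero]; exact log_le_log (by positivity) hlow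
  have h2 : log (log y) ≤ log 2 + log (log x) := by
    rw [← log_mul two_ne_zero hlx.ne']; exact log_le_log (by linarith) hup
  rw [abs_sub_le_iff]; constructor <;> linarith

lemma exists_prime_mul_mem_Ioc {m n : ℕ} (hm : 0 < m) (hmn : m ≤ 8 * n) :
    ∃ N : ℕ, N.Prime ∧ 8 * n < m * N ∧ m * N ≤ 16 * n := by
  obtain ⟨N, hN, hlt, hle⟩ := Nat.exists_prime_lt_and_le_two_mul (8 * n / m)
    (Nat.div_pos hmn hm).ne'
  refine ⟨N, hN, (Nat.lt_mul_div_succ (8 * n) hm).trans_le (Nat.mul_le_mul_left m hlt), ?_⟩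
  calc m * N ≤ 2 * (m * (8 * n / m)) := by rw [mul_left_comm]; exact Nat.mul_le_mul_left m hle
    _ ≤ 16 * n := by linarith [Nat.mul_div_le (8 * n) m]

lemma eventually_exists_prime_scale (u : ℕ) :
    ∀ᶠ n : ℕ in atTop, ∃ W N : ℕ, N.Prime ∧ u < N ∧ primorial W < n ∧
      8 * n < primorial W * N ∧ primorial W * N ≤ 16 * n ∧
      (1 / 8 : ℝ) * log (log N) ≤ W ∧ (W : ℝ) ≤ (1 / 2 : ℝ) * log (log N) := by
  have hsmall : ∀ᶠ x : ℝ in atTop, 2 * log x ≤ √x := by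
    filter_upwards [(isLittleO_log_rpow_atTop one_half_pos).bound (by norm_num : (0 : ℝ) < 1 / 2),
      eventually_ge_atTop 1] with x hx hx1
    rw [norm_of_nonneg (log_nonneg hx1), norm_of_nonneg (by positivity), ← sqrt_eq_rpow] at hx
    linarith
  filter_upwards [tendsto_natCast_atTop_atTop.eventually (hsmall.and
    ((eventually_ge_atTop (exp (exp 7))).and (eventually_ge_atTop (((u : ℝ) + 1) ^ 2))))]
    with n ⟨hsmall, hbig, hu⟩
  have hlog : exp 7 ≤ log n := (le_log_iff_exp_le ((exp_pos _).trans_le hbig)).2 hbig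
  have hL : 7 ≤ log (log n) := (le_log_iff_exp_le ((exp_pos _).trans_le hlog)).2 hlog
  have hexp7 : 8 ≤ exp 7 := by linarith [add_one_le_exp (7 : ℝ)]
  have hsq : √(n : ℝ) * √(n : ℝ) = n := mul_self_sqrt (Nat.cast_nonneg n)
  have hn : (16 : ℝ) ≤ n := by nlinarith
  set W := ⌈log (log n) / 8⌉₊ + 1
  have hW₁ : log (log n) / 8 + 1 ≤ W := by
    push_cast [W]; linarith [Nat.le_ceil (log (log n) / 8)]
  have hW₂ : (W : ℝ) ≤ log (log n) / 8 + 2 := by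
    push_cast [W]; linarith [Nat.ceil_lt_add_one (show 0 ≤ log (log n) / 8 by linarith)]
  have hm := primorial_le_sixteen_mul_log (by linarith) hW₂
  have hmn : primorial W < n := by exact_mod_cast (show (primorial W : ℝ) < n by nlinarith)
  obtain ⟨N, hN, hlt, hle⟩ := exists_prime_mul_mem_Ioc (n := n) (primorial_pos W) (by omega)
  have hlt' : 8 * (n : ℝ) < primorial W * N := by exact_mod_cast hlt
  have hle' : (primorial W : ℝ) * N ≤ 16 * n := by exact_mod_cast hle
  have hNsqrt : √(n : ℝ) ≤ N := by nlinarith [Nat.cast_nonneg (α := ℝ) N]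
  have hNsq : (N : ℝ) ≤ (n : ℝ) ^ 2 := by
    nlinarith [show (1 : ℝ) ≤ primorial W by exact_mod_cast primorial_pos W]
  have huN : (u : ℝ) + 1 ≤ N :=
    ((le_sqrt (by positivity) (Nat.cast_nonneg _)).2 hu).trans hNsqrt
  have hloglog := abs_le.1 (abs_log_log_sub_le (by linarith) hNsqrt hNsq)
  have hlog2 : log 2 < 1 := by linarith [log_two_lt_d9]
  exact ⟨W, N, hN, by exact_mod_cast (show (u : ℝ) < N by linarith), hmn, hlt, hle,
    by linarith, by linarith⟩

namespace Fc

variable {c : ℝ} (F : Fc c)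

structure IsInverse (φ : ℝ → ℝ) : Prop where
  left_inv : ∀ x ≥ F.x₀, φ (F.toFun x) = x
  right_inv : ∀ y ≥ F.toFun F.x₀, F.toFun (φ y) = y
  le_inv : ∀ y ≥ F.toFun F.x₀, F.x₀ ≤ φ y

lemma strictMonoOn : StrictMonoOn F.toFun (Ici F.x₀) :=
  strictMonoOn_of_deriv_pos (convex_Ici _) F.contDiffOn.continuousOn
    fun x hx => F.deriv_pos x (interior_subset hx)

lemma monotoneOn_deriv : MonotoneOn (deriv F.toFun) (Ioi F.x₀) := by
  have hC2 : ContDiffOn ℝ (2 + 1) F.toFun (Ioi F.x₀) :=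
    F.contDiffOn.mono Ioi_subset_Ici_self
  refine (strictMonoOn_of_deriv_pos (convex_Ioi _)
    ((contDiffOn_succ_iff_deriv_of_isOpen isOpen_Ioi).1 hC2).2.2.continuousOn
    fun x hx => ?_).monotoneOn
  rw [interior_Ioi] at hx
  simpa only [iteratedDeriv_succ, iteratedDeriv_zero] using F.deriv2_pos x (le_of_lt hx)

lemma sub_le_deriv_mul {x : ℝ} (hx : F.x₀ < x) :
    F.toFun x - F.toFun F.x₀ ≤ deriv F.toFun x * (x - F.x₀) := by
  have hdiff : DifferentiableOn ℝ F.toFun (Ioi F.x₀) :=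
    (F.contDiffOn.mono Ioi_subset_Ici_self).differentiableOn (by norm_num)
  obtain ⟨ξ, hξ, hslope⟩ := exists_deriv_eq_slope F.toFun hx
    (F.contDiffOn.continuousOn.mono Icc_subset_Ici_self) (hdiff.mono fun y hy => hy.1)
  rw [← div_le_iff₀ (sub_pos.2 hx), ← hslope]
  exact F.monotoneOn_deriv hξ.1 hx hξ.2.le

variable {F} {φ : ℝ → ℝ}

lemma IsInverse.lt_inv (hφ : F.IsInverse φ) {y : ℝ} (hy : F.toFun F.x₀ < y) : F.x₀ < φ y := by
  refine (hφ.le_inv y hy.le).lt_of_ne fun h => hy.ne ?_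
  rw [h, hφ.right_inv y hy.le]

lemma IsInverse.monotoneOn (hφ : F.IsInverse φ) : MonotoneOn φ (Ici (F.toFun F.x₀)) :=
  fun y hy z hz hyz => (F.strictMonoOn.le_iff_le (hφ.le_inv y hy) (hφ.le_inv z hz)).1
    (by rwa [hφ.right_inv y hy, hφ.right_inv z hz])

lemma IsInverse.hasDerivAt (hφ : F.IsInverse φ) {y : ℝ} (hy : F.toFun F.x₀ < y) :
    HasDerivAt φ (deriv F.toFun (φ y))⁻¹ y := by
  have hx := hφ.lt_inv hy
  have himage : Ioi F.x₀ ⊆ φ '' Ici (F.toFun F.x₀) := fun x hx' =>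
    ⟨F.toFun x, F.strictMonoOn.monotoneOn (mem_Ici.2 le_rfl) (mem_Ici.2 hx'.le) hx'.le,
      hφ.left_inv x hx'.le⟩
  have hcont : ContinuousAt φ y := continuousAt_of_monotoneOn_of_image_mem_nhds hφ.monotoneOn
    (Ici_mem_nhds hy) (Filter.mem_of_superset (Ioi_mem_nhds hx) himage)
  have hdiff : DifferentiableAt ℝ F.toFun (φ y) :=
    (F.contDiffOn.contDiffAt (Ici_mem_nhds hx)).differentiableAt (by norm_num)
  refine hdiff.hasDerivAt.of_local_left_inverse hcont (F.deriv_pos _ hx.le).ne' ?_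
  filter_upwards [Ioi_mem_nhds hy] with z hz using hφ.right_inv z (le_of_lt hz)

lemma IsInverse.deriv_pos_and_le (hφ : F.IsInverse φ) {y z : ℝ} (hy : 2 * F.toFun F.x₀ ≤ y)
    (hyz : y ≤ z) : 0 < deriv φ z ∧ deriv φ z ≤ 2 * φ y / y := by
  have h₀ : 1 ≤ F.toFun F.x₀ := F.one_le _ le_rfl
  have hy₀ : F.toFun F.x₀ < y := by linarith
  have hx := hφ.lt_inv hy₀
  have hxz : φ y ≤ φ z := hφ.monotoneOn hy₀.le (hy₀.le.trans hyz) hyz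
  have hpos := F.deriv_pos _ hx.le
  have hslope := F.sub_le_deriv_mul hx
  rw [hφ.right_inv y hy₀.le] at hslope
  have hkey : y ≤ 2 * φ y * deriv F.toFun (φ y) := by
    nlinarith [F.one_le_x₀]
  have hmono : deriv F.toFun (φ y) ≤ deriv F.toFun (φ z) :=
    F.monotoneOn_deriv hx (hx.trans_le hxz) hxz
  rw [(hφ.hasDerivAt (hy₀.trans_le hyz)).deriv]
  refine ⟨inv_pos.2 (hpos.trans_le hmono), ?_⟩
  have hφy : 0 < φ y := by linarith [F.one_le_x₀]
  have hy0 : 0 < y := by linarith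
  rw [inv_le_comm₀ (hpos.trans_le hmono) (by positivity), inv_div, div_le_iff₀ (by positivity)]
  nlinarith

lemma IsInverse.le_lamh (hφ : F.IsInverse φ) {b m N n k : ℕ}
    (hn : 2 * F.toFun F.x₀ ≤ n) (hm : 0 < m) (hN : 0 < N) (hmN : m * N ≤ 16 * n) (hk : k ≤ N)
    (hp : m * k + b ∈ Ph F) (hnp : n ≤ m * k + b) :
    m.totient * log n / (32 * φ n) ≤ lamh F φ b m N k := by
  rw [lamh, if_pos ⟨hk, hp⟩]
  have hnp' : (n : ℝ) ≤ ((m * k + b : ℕ) : ℝ) := by exact_mod_cast hnp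
  obtain ⟨hpos, hle⟩ := hφ.deriv_pos_and_le hn hnp'
  have hn0 : (0 : ℝ) < n := by linarith [F.one_le _ le_rfl]
  have hφn : 0 < φ n := by linarith [hφ.le_inv n (by linarith [F.one_le _ le_rfl]), F.one_le_x₀]
  have hmN' : (m : ℝ) * N ≤ 16 * n := by exact_mod_cast hmN
  have hden : (m : ℝ) * N * deriv φ ((m * k + b : ℕ) : ℝ) ≤ 32 * φ n :=
    calc (m : ℝ) * N * deriv φ ((m * k + b : ℕ) : ℝ) ≤ 16 * n * (2 * φ n / n) :=
          mul_le_mul hmN' hle hpos.le (by positivity)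
      _ = 32 * φ n := by field_simp; ring
  have hmN0 : (0 : ℝ) < m * N := by exact_mod_cast Nat.mul_pos hm hN
  rw [show (m : ℝ) * k + b = ((m * k + b : ℕ) : ℝ) by push_cast; ring]
  exact div_le_div₀ (mul_nonneg (Nat.cast_nonneg _) (log_natCast_nonneg _))
    (mul_le_mul_of_nonneg_left (log_le_log hn0 hnp') (Nat.cast_nonneg _)) (mul_pos hmN0 hpos) hden

lemma IsInverse.exists_not_hasThreeAP_le_sum_lamh (hφ : F.IsInverse φ) {A₀ : Set ℕ}
    (hA₀ : ¬ HasThreeAP A₀) {α₀ : ℝ} {n m N : ℕ} (hn : 2 * F.toFun F.x₀ ≤ n) (hm : 0 < m)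
    (hmn : m < n) (hmN : 8 * n < m * N) (hmN' : m * N ≤ 16 * n)
    (hdense : α₀ < log n / φ n * Nat.card ↥(A₀ ∩ Ph F ∩ Set.Icc n (2 * n))) :
    ∃ A : Finset ℕ, A ⊆ Finset.Icc 1 (N / 2) ∧ ¬ HasThreeAP ↑A ∧
      ∃ b < m, b.Coprime m ∧ α₀ / 32 ≤ ∑ k ∈ A, lamh F φ b m N k := by
  set T := (Finset.Icc n (2 * n)).filter (· ∈ A₀ ∩ Ph F)
  have hT : A₀ ∩ Ph F ∩ Set.Icc n (2 * n) = ↑T := by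
    ext p
    simp only [T, Finset.coe_filter, Finset.mem_Icc, mem_inter_iff, mem_Icc, Set.mem_ofPred_eq]
    tauto
  rw [hT, Nat.card_coe_set_eq, ncard_coe_finset] at hdense
  have hcop : ∀ p ∈ T, p.Coprime m := fun p hp => by
    obtain ⟨hp, -, hPh⟩ := Finset.mem_filter.1 hp
    exact (hPh.1.coprime_iff_not_dvd).2
      (Nat.not_dvd_of_pos_of_lt hm (hmn.trans_le (Finset.mem_Icc.1 hp).1))
  have hN : 0 < N := Nat.pos_of_ne_zero fun h => by simp [h] at hmN
  obtain ⟨b, hbm, hb, hcard⟩ := Finset.exists_coprime_residue_card_le_totient_mul hm T hcop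
  set A := (Finset.Icc 1 (N / 2)).filter (fun k => m * k + b ∈ T)
  have hfiber : (T.filter (· % m = b)).card ≤ A.card :=
    Finset.card_filter_mod_eq_le_card_preimage hm hmN fun p hp =>
      have hpI := Finset.mem_Icc.1 (Finset.mem_filter.1 hp).1
      ⟨hmn.le.trans hpI.1, hpI.2⟩
  refine ⟨A, Finset.filter_subset _ _, fun hAP => hA₀ (hAP.mapsTo_mul_add hm.ne' fun k hk =>
    (Finset.mem_filter.1 (Finset.mem_filter.1 hk).2).2.1), b, hbm, hb, ?_⟩
  have hterm : ∀ k ∈ A, m.totient * log n / (32 * φ n) ≤ lamh F φ b m N k := fun k hk => by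
    obtain ⟨hkI, hkT⟩ := Finset.mem_filter.1 hk
    obtain ⟨hpI, -, hPh⟩ := Finset.mem_filter.1 hkT
    exact hφ.le_lamh hn hm hN hmN' ((Finset.mem_Icc.1 hkI).2.trans (Nat.div_le_self _ _))
      hPh (Finset.mem_Icc.1 hpI).1
  have hφn : 0 < φ n := by linarith [hφ.le_inv n (by linarith [F.one_le _ le_rfl]), F.one_le_x₀]
  have hfiber' : (T.filter (· % m = b)).card ≤ (A.card : ℝ) := by exact_mod_cast hfiber
  calc α₀ / 32 ≤ log n / φ n * T.card / 32 := by linarith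
    _ ≤ log n / φ n * (m.totient * A.card) / 32 := by
        gcongr
        exact hcard.trans (by gcongr)
    _ = A.card * (m.totient * log n / (32 * φ n)) := by ring
    _ ≤ ∑ k ∈ A, lamh F φ b m N k := by
        simpa only [nsmul_eq_mul] using Finset.card_nsmul_le_sum A _ _ hterm

end Fc

theorem transference_principle_general {c : ℝ} (F : Fc c)
    (φ : ℝ → ℝ) (hφ₁ : ∀ x ≥ F.x₀, φ (F.toFun x) = x)
    (hφ₂ : ∀ y ≥ F.toFun F.x₀, F.toFun (φ y) = y)
    (hφ₃ : ∀ y ≥ F.toFun F.x₀, F.x₀ ≤ φ y)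
    (A₀ : Set ℕ)
    (α₀ : ℝ) (hα₀ : 0 < α₀)
    (hdens : α₀ < Filter.limsup (fun n : ℕ =>
      Real.log n / φ n * (Nat.card ↥(A₀ ∩ Ph F ∩ Set.Icc n (2 * n)) : ℝ)) Filter.atTop)
    (hnoAP : ¬ ∃ a ∈ A₀, ∃ d : ℕ, d ≠ 0 ∧ a + d ∈ A₀ ∧ a + 2 * d ∈ A₀) :
    ∃ α > 0, {N : ℕ | N.Prime ∧
      ∃ A : Finset ℕ, A ⊆ Finset.Icc 1 (N / 2) ∧
      ∃ W : ℕ, (1 / 8 : ℝ) * Real.log (Real.log N) ≤ W ∧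
        (W : ℝ) ≤ (1 / 2 : ℝ) * Real.log (Real.log N) ∧
        (¬ ∃ a ∈ A, ∃ d : ℕ, d ≠ 0 ∧ a + d ∈ A ∧ a + 2 * d ∈ A) ∧
        ∃ b : ℕ, b ≤ primorial W - 1 ∧ Nat.gcd b (primorial W) = 1 ∧
          α ≤ ∑ n ∈ A, lamh F φ b (primorial W) N n}.Infinite := by
  have hφ : F.IsInverse φ := ⟨hφ₁, hφ₂, hφ₃⟩
  have hlarge : ∀ᶠ n : ℕ in atTop, 2 * F.toFun F.x₀ ≤ n :=
    tendsto_natCast_atTop_atTop.eventually (eventually_ge_atTop _)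
  have hfreq : ∃ᶠ n : ℕ in atTop,
      α₀ < log n / φ n * Nat.card ↥(A₀ ∩ Ph F ∩ Set.Icc n (2 * n)) := by
    refine frequently_lt_of_lt_limsup (isCoboundedUnder_le_of_eventually_le _ (x := 0) ?_) hdens
    filter_upwards [hlarge] with n hn
    have hφn := hφ.le_inv n (by linarith [F.one_le _ le_rfl])
    exact mul_nonneg (div_nonneg (log_natCast_nonneg n) (by linarith [F.one_le_x₀]))
      (Nat.cast_nonneg _)
  refine ⟨α₀ / 32, by positivity, infinite_of_forall_exists_gt fun u => ?_⟩
  obtain ⟨n, hdense, hn, W, N, hN, huN, hmn, hmN, hmN', hW₁, hW₂⟩ :=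
    (hfreq.and_eventually (hlarge.and (eventually_exists_prime_scale u))).exists
  obtain ⟨A, hA, hAP, b, hb, hbm, hsum⟩ := hφ.exists_not_hasThreeAP_le_sum_lamh hnoAP hn
    (primorial_pos W) hmn hmN hmN' hdense
  exact ⟨N, ⟨hN, A, hA, W, hW₁, hW₂, hAP, b, by omega, hbm, hsum⟩, huN⟩

/-- **Lemma 5.2 of the paper (transference).** If `A₀ ⊆ P_h` has relative upper density
`> α₀ > 0` along dyadic blocks and contains no three-term arithmetic progression, then
there is `α > 0` and infinitely many primes `N` for which there are
`A ⊆ {1, …, ⌊N/2⌋}` and `W ∈ [⅛ log log N, ½ log log N]` such that `A` contains no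
three-term AP and `λ^h_{b,m,N}(A) ≥ α` for some `0 ≤ b ≤ m-1`, `(b, m) = 1`,
`m = ∏_{p ≤ W} p`. -/
theorem transference_principle {c : ℝ} (hc₁ : 1 ≤ c) (hc₂ : c < 72 / 71) (F : Fc c)
    (γ : ℝ) (hγ : γ = 1 / c)
    (φ : ℝ → ℝ) (hφ₁ : ∀ x ≥ F.x₀, φ (F.toFun x) = x)
    (hφ₂ : ∀ y ≥ F.toFun F.x₀, F.toFun (φ y) = y)
    (hφ₃ : ∀ y ≥ F.toFun F.x₀, F.x₀ ≤ φ y)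
    (A₀ : Set ℕ) (hA₀ : A₀ ⊆ Ph F)
    (α₀ : ℝ) (hα₀ : 0 < α₀)
    (hdens : α₀ < Filter.limsup (fun n : ℕ =>
      Real.log n / φ n * (Nat.card ↥(A₀ ∩ Ph F ∩ Set.Icc n (2 * n)) : ℝ)) Filter.atTop)
    (hnoAP : ¬ ∃ a ∈ A₀, ∃ d : ℕ, d ≠ 0 ∧ a + d ∈ A₀ ∧ a + 2 * d ∈ A₀) :
    ∃ α > 0, {N : ℕ | N.Prime ∧
      ∃ A : Finset ℕ, A ⊆ Finset.Icc 1 (N / 2) ∧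
      ∃ W : ℕ, (1 / 8 : ℝ) * Real.log (Real.log N) ≤ W ∧
        (W : ℝ) ≤ (1 / 2 : ℝ) * Real.log (Real.log N) ∧
        (¬ ∃ a ∈ A, ∃ d : ℕ, d ≠ 0 ∧ a + d ∈ A ∧ a + 2 * d ∈ A) ∧
        ∃ b : ℕ, b ≤ primorial W - 1 ∧ Nat.gcd b (primorial W) = 1 ∧
          α ≤ ∑ n ∈ A, lamh F φ b (primorial W) N n}.Infinite :=
  transference_principle_general F φ hφ₁ hφ₂ hφ₃ A₀ α₀ hα₀ hdens hnoAP
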